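/- Let A = (Σ, Q, I, Δ, F) be a nondeterministic finite automaton over a finite linearly ordered alphabet Σ, ℓ a natural number, and w ∈ L(A) with |w| = ℓ. Suppose there exists a word w'' ∈ L(A) with |w''| = ℓ and w <_LEX w'', and let w' be the lexicographically least such word. Let i be the unique index with w.take(i) = w'.take(i) and w[i] ≠ w'[i]. Then: (a) w[i] < w'[i]; (b) i is the largest index j < ℓ such that there exist a letter a > w[j] and a word v of length ℓ−1−j with (w.take(j))·a·v ∈ L(A); (c) w'[i] is the least letter a > w[i] such that there exists a word v of length ℓ−1−i with (w.take(i))·a·v ∈ L(A); (d) the suffix w'.drop(i+1) is the lexicographically least word v of length ℓ−1−i such that (w.take(i))·w'[i]·v ∈ L(A). -/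

import Mathlib

/-!
Only the lexicographic order matters, not the automaton. Let `S` be the set of words of `L(A)` of
length `ℓ`; then `w'` is the least element of `S` above `w`, so no word of `S` lies strictly
between `w` and `w'`. Comparing words that agree up to a position reduces to comparing the letters
there, so a word `(w.take j)·a·v` with `a > w[j]` lies above `w`, and also below `w'` when `j > i`
(it agrees with `w` at position `i`) or when `j = i` and `a < w'[i]`: this gives (b) and (c).
For (d), `(w.take i)·w'[i]·v` lies above `w`, hence above `w'`, and the common prefix cancels.
-/

/-- `AcceptsFrom Δ F q w`: the word `w` is accepted from state `q`. -/
def AcceptsFrom {Q A : Type*} (Δ : Set (Q × A × Q)) (F : Set Q) : Q → List A → Prop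
  | q, [] => q ∈ F
  | q, a :: w => ∃ q', (q, a, q') ∈ Δ ∧ AcceptsFrom Δ F q' w

/-- `w ∈ L(A)`: `w` is accepted from some initial state. -/
def InLang {Q A : Type*} (Δ : Set (Q × A × Q)) (I F : Set Q) (w : List A) : Prop :=
  ∃ q ∈ I, AcceptsFrom Δ F q w

/-- `w ≤_LEX w'`: nonstrict lexicographic order on words. -/
def LexLe {A : Type*} [LinearOrder A] (w w' : List A) : Prop :=
  w = w' ∨ List.Lex (· < ·) w w'

namespace List

variable {α : Type*}

theorem take_append_cons_drop_of_getElem?_eq_some {l : List α} {n : ℕ} {a : α}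
    (h : l[n]? = some a) : l.take n ++ a :: l.drop (n + 1) = l := by
  obtain ⟨hn, rfl⟩ := List.getElem?_eq_some_iff.1 h
  rw [getElem_cons_drop, take_append_drop]

variable [LinearOrder α]

theorem append_left_strictMono (p : List α) : StrictMono (p ++ ·) :=
  fun _ _ h => append_left_lt h

theorem lt_iff_lt_of_take_eq {x y : List α} {n : ℕ} {c d : α} (ht : x.take n = y.take n)
    (hx : x[n]? = some c) (hy : y[n]? = some d) (hcd : c ≠ d) : x < y ↔ c < d := by
  rw [← take_append_cons_drop_of_getElem?_eq_some hx,
    ← take_append_cons_drop_of_getElem?_eq_some hy, ht, (append_left_strictMono _).lt_iff_lt,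
    cons_lt_cons_iff]
  simp [hcd]

end List

theorem not_mem_of_isLeast_of_lt_of_lt {α : Type*} [Preorder α] {S : Set α} {x y z : α}
    (hleast : IsLeast {u ∈ S | x < u} z) (hxy : x < y) (hyz : y < z) : y ∉ S :=
  fun hy => (hleast.2 ⟨hy, hxy⟩).not_gt hyz

section NextWord

open List

variable {A : Type*} [LinearOrder A] {S : Set (List A)} {w w' : List A} {i : ℕ} {b b' : A}

theorem index_le_of_isLeast_of_take_append_cons_mem (hnext : IsLeast {u ∈ S | w < u} w')
    (htake : w.take i = w'.take i) (hb : w[i]? = some b) (hb' : w'[i]? = some b')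
    (hbb' : b < b') {j : ℕ} {a c : A} {v : List A}
    (hc : w[j]? = some c) (hca : c < a) (hu : w.take j ++ a :: v ∈ S) : j ≤ i := by
  by_contra! hij
  have hj : j ≤ w.length := (List.getElem?_eq_some_iff.1 hc).1.le
  have hlen : (w.take j).length = j := length_take_of_le hj
  have hwu : w < w.take j ++ a :: v :=
    (lt_iff_lt_of_take_eq (by simp [hj]) hc (by simp [hj]) hca.ne).2 hca
  have hui : (w.take j ++ a :: v)[i]? = some b := by
    rw [getElem?_append_left (hlen.symm ▸ hij), getElem?_take_of_lt hij, hb]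
  have huw' : w.take j ++ a :: v < w' := by
    refine (lt_iff_lt_of_take_eq ?_ hui hb' hbb'.ne).2 hbb'
    rw [take_append_of_le_length (hlen.symm ▸ hij.le), take_take, min_eq_left hij.le, htake]
  exact not_mem_of_isLeast_of_lt_of_lt hnext hwu huw' hu

theorem letter_le_of_isLeast_of_take_append_cons_mem (hnext : IsLeast {u ∈ S | w < u} w')
    (htake : w.take i = w'.take i) (hb : w[i]? = some b) (hb' : w'[i]? = some b')
    {a : A} {v : List A} (hba : b < a)
    (hu : w.take i ++ a :: v ∈ S) : b' ≤ a := by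
  by_contra! hab'
  have hi : i ≤ w.length := (List.getElem?_eq_some_iff.1 hb).1.le
  have hut : (w.take i ++ a :: v).take i = w.take i := by simp [hi]
  have hui : (w.take i ++ a :: v)[i]? = some a := by simp [hi]
  have hwu : w < w.take i ++ a :: v := (lt_iff_lt_of_take_eq hut.symm hb hui hba.ne).2 hba
  have huw' : w.take i ++ a :: v < w' :=
    (lt_iff_lt_of_take_eq (hut.trans htake) hui hb' hab'.ne).2 hab'
  exact not_mem_of_isLeast_of_lt_of_lt hnext hwu huw' hu

theorem drop_le_of_isLeast_of_take_append_cons_mem (hnext : IsLeast {u ∈ S | w < u} w')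
    (htake : w.take i = w'.take i) (hb : w[i]? = some b) (hb' : w'[i]? = some b')
    (hbb' : b < b') {v : List A}
    (hu : w.take i ++ b' :: v ∈ S) : w'.drop (i + 1) ≤ v := by
  have hi : i ≤ w.length := (List.getElem?_eq_some_iff.1 hb).1.le
  have hwu : w < w.take i ++ b' :: v :=
    (lt_iff_lt_of_take_eq (by simp [hi]) hb (by simp [hi]) hbb'.ne).2 hbb'
  have hw'u : w.take i ++ b' :: w'.drop (i + 1) ≤ w.take i ++ b' :: v := by
    rw [htake, take_append_cons_drop_of_getElem?_eq_some hb', ← htake]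
    exact hnext.2 ⟨hu, hwu⟩
  exact (append_left_strictMono (w.take i ++ [b'])).le_iff_le.1 (by simpa using hw'u)

end NextWord

theorem nextWord_characterization_general {Q A : Type*} [LinearOrder A]
    (Δ : Set (Q × A × Q)) (I F : Set Q) (ℓ : ℕ) (w w' : List A)
    (hwlen : w.length = ℓ)
    (hw' : InLang Δ I F w') (hw'len : w'.length = ℓ)
    (hlex : List.Lex (· < ·) w w')
    (hleast : ∀ v : List A, InLang Δ I F v → v.length = ℓ →
      List.Lex (· < ·) w v → LexLe w' v)
    (i : ℕ) (htake : w.take i = w'.take i) (hne : w[i]? ≠ w'[i]?) :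
    -- (a)
    (∃ b b' : A, w[i]? = some b ∧ w'[i]? = some b' ∧ b < b') ∧
    -- (b)
    (i < ℓ ∧
      (∃ (a b : A), w[i]? = some b ∧ b < a ∧
        ∃ v : List A, v.length = ℓ - 1 - i ∧ InLang Δ I F (w.take i ++ a :: v)) ∧
      (∀ j, j < ℓ →
        (∃ (a b : A), w[j]? = some b ∧ b < a ∧
          ∃ v : List A, v.length = ℓ - 1 - j ∧ InLang Δ I F (w.take j ++ a :: v)) →
        j ≤ i)) ∧
    -- (c)
    (∃ b b' : A, w[i]? = some b ∧ w'[i]? = some b' ∧ b < b' ∧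
      (∃ v : List A, v.length = ℓ - 1 - i ∧ InLang Δ I F (w.take i ++ b' :: v)) ∧
      (∀ a : A, b < a →
        (∃ v : List A, v.length = ℓ - 1 - i ∧ InLang Δ I F (w.take i ++ a :: v)) →
        b' ≤ a)) ∧
    -- (d)
    (∃ b' : A, w'[i]? = some b' ∧
      (w'.drop (i + 1)).length = ℓ - 1 - i ∧
      InLang Δ I F (w.take i ++ b' :: w'.drop (i + 1)) ∧
      (∀ v : List A, v.length = ℓ - 1 - i →
        InLang Δ I F (w.take i ++ b' :: v) → LexLe (w'.drop (i + 1)) v)) := by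
  -- `List.Lex (· < ·)` and `LexLe` are definitionally `<` and `≤` of Mathlib's order on lists.
  let S := {u : List A | InLang Δ I F u ∧ u.length = ℓ}
  have hnext : IsLeast {u ∈ S | w < u} w' :=
    ⟨⟨⟨hw', hw'len⟩, hlex⟩, fun u ⟨⟨hu, hulen⟩, hwu⟩ => hleast u hu hulen hwu⟩
  have hmem {j : ℕ} {a : A} {v : List A} (hj : j < ℓ) (hv : v.length = ℓ - 1 - j)
      (hu : InLang Δ I F (w.take j ++ a :: v)) : w.take j ++ a :: v ∈ S :=
    ⟨hu, by simp only [List.length_append, List.length_take, List.length_cons]; omega⟩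
  have hi : i < ℓ := by
    by_contra! hi
    exact hne (by rw [List.getElem?_eq_none (by omega), List.getElem?_eq_none (by omega)])
  obtain ⟨b, hb⟩ : ∃ b, w[i]? = some b := ⟨w[i], List.getElem?_eq_getElem (by omega)⟩
  obtain ⟨b', hb'⟩ : ∃ b', w'[i]? = some b' := ⟨w'[i], List.getElem?_eq_getElem (by omega)⟩
  have hbb' : b < b' :=
    (List.lt_iff_lt_of_take_eq htake hb hb' fun h => hne (by rw [hb, hb', h])).1 hlex
  have hw'L : InLang Δ I F (w.take i ++ b' :: w'.drop (i + 1)) := by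
    rwa [htake, List.take_append_cons_drop_of_getElem?_eq_some hb']
  have hdrop : (w'.drop (i + 1)).length = ℓ - 1 - i := by rw [List.length_drop]; omega
  refine ⟨⟨b, b', hb, hb', hbb'⟩, ⟨hi, ⟨b', b, hb, hbb', _, hdrop, hw'L⟩, ?_⟩,
    ⟨b, b', hb, hb', hbb', ⟨_, hdrop, hw'L⟩, ?_⟩, ⟨b', hb', hdrop, hw'L, ?_⟩⟩
  · rintro j hj ⟨a, c, hc, hca, v, hv, hu⟩
    exact index_le_of_isLeast_of_take_append_cons_mem hnext htake hb hb' hbb' hc hca (hmem hj hv hu)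
  · rintro a hba ⟨v, hv, hu⟩
    exact letter_le_of_isLeast_of_take_append_cons_mem hnext htake hb hb' hba (hmem hi hv hu)
  · intro v hv hu
    exact drop_le_of_isLeast_of_take_append_cons_mem hnext htake hb hb' hbb' (hmem hi hv hu)

/-- Let `w ∈ L(A)` of length `ℓ`, let `w'` be the lexicographically
least word of `L(A)` of length `ℓ` with `w <_LEX w'`, and let `i` be the unique
index where `w` and `w'` first differ. Then:
(a) `w[i] < w'[i]`;
(b) `i` is the largest index `j < ℓ` admitting a letter `a > w[j]` and a word `v`
of length `ℓ-1-j` with `(w.take j)·a·v ∈ L(A)`;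
(c) `w'[i]` is the least letter `a > w[i]` admitting a word `v` of length `ℓ-1-i`
with `(w.take i)·a·v ∈ L(A)`;
(d) `w'.drop (i+1)` is the lexicographically least word `v` of length `ℓ-1-i` with
`(w.take i)·w'[i]·v ∈ L(A)`. -/
theorem nextWord_characterization {Q A : Type*} [Fintype Q] [Fintype A] [LinearOrder A]
    (Δ : Set (Q × A × Q)) (I F : Set Q) (ℓ : ℕ) (w w' : List A)
    (hw : InLang Δ I F w) (hwlen : w.length = ℓ)
    (hw' : InLang Δ I F w') (hw'len : w'.length = ℓ)
    (hlex : List.Lex (· < ·) w w')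
    (hleast : ∀ v : List A, InLang Δ I F v → v.length = ℓ →
      List.Lex (· < ·) w v → LexLe w' v)
    (i : ℕ) (htake : w.take i = w'.take i) (hne : w[i]? ≠ w'[i]?) :
    -- (a)
    (∃ b b' : A, w[i]? = some b ∧ w'[i]? = some b' ∧ b < b') ∧
    -- (b)
    (i < ℓ ∧
      (∃ (a b : A), w[i]? = some b ∧ b < a ∧
        ∃ v : List A, v.length = ℓ - 1 - i ∧ InLang Δ I F (w.take i ++ a :: v)) ∧
      (∀ j, j < ℓ →
        (∃ (a b : A), w[j]? = some b ∧ b < a ∧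
          ∃ v : List A, v.length = ℓ - 1 - j ∧ InLang Δ I F (w.take j ++ a :: v)) →
        j ≤ i)) ∧
    -- (c)
    (∃ b b' : A, w[i]? = some b ∧ w'[i]? = some b' ∧ b < b' ∧
      (∃ v : List A, v.length = ℓ - 1 - i ∧ InLang Δ I F (w.take i ++ b' :: v)) ∧
      (∀ a : A, b < a →
        (∃ v : List A, v.length = ℓ - 1 - i ∧ InLang Δ I F (w.take i ++ a :: v)) →
        b' ≤ a)) ∧
    -- (d)
    (∃ b' : A, w'[i]? = some b' ∧
      (w'.drop (i + 1)).length = ℓ - 1 - i ∧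
      InLang Δ I F (w.take i ++ b' :: w'.drop (i + 1)) ∧
      (∀ v : List A, v.length = ℓ - 1 - i →
        InLang Δ I F (w.take i ++ b' :: v) → LexLe (w'.drop (i + 1)) v)) :=
  nextWord_characterization_general Δ I F ℓ w w' hwlen hw' hw'len hlex hleast i htake hne
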